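/- arXiv:math/0311480 — 2 statements merged into one kernel-verified Lean document; each statement's English description precedes it below -/
import Mathlib

section
/- Say κ ∈ ℂ is exponentially κ-bounded for n steps if Re(κ) ≥ 4, |Im(E_κ^{k-1}(κ))| < F^{k-1}(Re(κ) - 2) for 1 ≤ k ≤ n, and Re(E_κ^{k-1}(κ)) > 0 for 1 ≤ k ≤ n-1. If κ is exponentially κ-bounded for n ≥ 1 steps, then |Re(E_κ^k(κ))| ≥ F^k(Re(κ) - 1) for all 0 ≤ k ≤ n-1. -/
/-!
Induct on the stronger bound `F^[k] (Re κ - 1) + 1 ≤ |Re z_k|`, where `z_k = E_κ^k(κ)`.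
If `Re z_k` is positive, `exp z_k` has modulus `exp (Re z_k) ≥ e · exp (F^[k] (Re κ - 1))`,
while `Im (exp z_k) = Im z_{k+1} - Im κ` is at most about `exp (F^[k] (Re κ - 2))`, smaller by
another factor `e`. So almost all of the modulus of `exp z_k` lies in its real part, which
therefore exceeds `exp (F^[k] (Re κ - 1)) + Re κ`, and the shift by `κ` costs at most `Re κ`.
-/

/-- Model function for exponential growth: F(t) = e^t - 1. -/
noncomputable def F (t : ℝ) : ℝ := Real.exp t - 1

/-- The exponential map E_κ(z) = exp(z) + κ. -/
noncomputable def E (κ : ℂ) (z : ℂ) : ℂ := Complex.exp z + κ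

/-- κ is exponentially κ-bounded for n steps: Re(κ) ≥ 4,
    |Im(E_κ^{k-1}(κ))| < F^{k-1}(Re(κ) - 2) for 1 ≤ k ≤ n, and
    Re(E_κ^{k-1}(κ)) > 0 for 1 ≤ k ≤ n - 1. -/
def ExpBounded (κ : ℂ) (n : ℕ) : Prop :=
  4 ≤ κ.re ∧
  (∀ k : ℕ, k < n → |((E κ)^[k] κ).im| < F^[k] (κ.re - 2)) ∧
  (∀ k : ℕ, k + 1 < n → 0 < ((E κ)^[k] κ).re)

lemma le_F (s : ℝ) : s ≤ F s := by
  unfold F; linarith [Real.add_one_le_exp s]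

lemma F_monotone : Monotone F := fun _ _ hab => by
  simpa [F] using Real.exp_le_exp.2 hab

lemma le_F_iterate (k : ℕ) (s : ℝ) : s ≤ F^[k] s := by
  induction k with
  | zero => rfl
  | succ k ih => exact ih.trans (by rw [Function.iterate_succ_apply']; exact le_F _)

lemma F_iterate_succ_add_one (k : ℕ) (s : ℝ) : F^[k + 1] s + 1 = Real.exp (F^[k] s) := by
  rw [Function.iterate_succ_apply', F, sub_add_cancel]

lemma F_add_one_le {s : ℝ} (hs : 0 ≤ s) : F s + 1 ≤ F (s + 1) := by
  have h2 : 2 ≤ Real.exp 1 := by linarith [Real.add_one_le_exp 1]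
  have h1 : 1 ≤ Real.exp s := Real.one_le_exp hs
  simp only [F, Real.exp_add]
  nlinarith

lemma F_iterate_add_one_le (k : ℕ) {s : ℝ} (hs : 0 ≤ s) : F^[k] s + 1 ≤ F^[k] (s + 1) := by
  induction k generalizing s with
  | zero => rfl
  | succ k ih =>
    rw [Function.iterate_succ_apply, Function.iterate_succ_apply]
    exact (ih (hs.trans (le_F s))).trans ((F_monotone.iterate k) (F_add_one_le hs))

lemma le_abs_re_of_sq_add_sq_le {w : ℂ} {A B : ℝ} (hA : 0 ≤ A) (him : |w.im| ≤ B)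
    (hw : A ^ 2 + B ^ 2 ≤ ‖w‖ ^ 2) : A ≤ |w.re| := by
  have him2 : w.im ^ 2 ≤ B ^ 2 := sq_le_sq' (abs_le.1 him).1 (abs_le.1 him).2
  have hre2 : A ^ 2 ≤ w.re ^ 2 := by
    rw [Complex.sq_norm, Complex.normSq_apply] at hw
    nlinarith
  simpa [abs_of_nonneg hA] using sq_le_sq.1 hre2

lemma sq_add_sq_le_exp_sq {t a b x : ℝ} (ht : 4 ≤ t) (hb : t - 2 ≤ b) (hab : b + 1 ≤ a)
    (hax : a + 1 ≤ x) : (Real.exp a + t) ^ 2 + (Real.exp b + t - 3) ^ 2 ≤ Real.exp x ^ 2 := by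
  have he : (2.7 : ℝ) ≤ Real.exp 1 := by linarith [Real.exp_one_gt_d9]
  have hBt : t - 1 ≤ Real.exp b := by linarith [Real.add_one_le_exp b]
  have hBA : Real.exp 1 * Real.exp b ≤ Real.exp a := by
    rw [← Real.exp_add, add_comm]; exact Real.exp_le_exp.2 hab
  have hAX : Real.exp 1 * Real.exp a ≤ Real.exp x := by
    rw [← Real.exp_add, add_comm]; exact Real.exp_le_exp.2 hax
  set A := Real.exp a
  set B := Real.exp b
  set X := Real.exp x
  have hB : 3 ≤ B := by linarith
  have hA : 2.7 * B ≤ A := by nlinarith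
  have hXA : 2.7 * A ≤ X := by nlinarith
  have hX2 : (2.7 * A) ^ 2 ≤ X ^ 2 := pow_le_pow_left₀ (by linarith) hXA 2
  nlinarith [sq_nonneg (A - 2.7 * B), sq_nonneg (B - 3)]

/-- The inductive step, with `a = F^[k] (Re κ - 1)` and `b = F^[k] (Re κ - 2)`. -/
lemma exp_le_abs_re_E {κ z : ℂ} {a b : ℝ} (hκ : 4 ≤ κ.re) (hb : κ.re - 2 ≤ b)
    (hab : b + 1 ≤ a) (hz : a + 1 ≤ z.re) (hκim : |κ.im| < κ.re - 2)
    (hEim : |(E κ z).im| < Real.exp b - 1) : Real.exp a ≤ |(E κ z).re| := by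
  have him : |(Complex.exp z).im| ≤ Real.exp b + κ.re - 3 := by
    have : (Complex.exp z).im = (E κ z).im - κ.im := by simp [E]
    rw [this]
    linarith [abs_sub (E κ z).im κ.im]
  have hre : Real.exp a + κ.re ≤ |(Complex.exp z).re| :=
    le_abs_re_of_sq_add_sq_le (by positivity) him
      (by rw [Complex.norm_exp]; exact sq_add_sq_le_exp_sq hκ hb hab hz)
  have hsum : (E κ z).re = (Complex.exp z).re + κ.re := by simp [E]
  have hshift := abs_sub_abs_le_abs_sub (Complex.exp z).re (-κ.re)
  rw [abs_neg, sub_neg_eq_add, abs_of_nonneg (by linarith : (0 : ℝ) ≤ κ.re)] at hshift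
  rw [hsum]
  linarith

lemma F_iterate_add_one_le_abs_re {κ : ℂ} {n : ℕ} (h : ExpBounded κ n) :
    ∀ k : ℕ, k < n → F^[k] (κ.re - 1) + 1 ≤ |((E κ)^[k] κ).re| := by
  obtain ⟨hκ, him, hre⟩ := h
  intro k
  induction k with
  | zero =>
    intro _
    simp only [Function.iterate_zero, id_eq]
    rw [abs_of_nonneg (by linarith)]
    linarith
  | succ k ih =>
    intro hk
    have hz : F^[k] (κ.re - 1) + 1 ≤ ((E κ)^[k] κ).re := by
      simpa [abs_of_pos (hre k hk)] using ih (by omega)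
    have hab : F^[k] (κ.re - 2) + 1 ≤ F^[k] (κ.re - 1) := by
      simpa [show κ.re - 2 + 1 = κ.re - 1 by ring] using
        F_iterate_add_one_le k (show 0 ≤ κ.re - 2 by linarith)
    have hEim : |(E κ ((E κ)^[k] κ)).im| < Real.exp (F^[k] (κ.re - 2)) - 1 := by
      rw [← F_iterate_succ_add_one, add_sub_cancel_right, ← Function.iterate_succ_apply' (E κ)]
      exact him (k + 1) hk
    rw [F_iterate_succ_add_one, Function.iterate_succ_apply']
    exact exp_le_abs_re_E hκ (le_F_iterate k _) hab hz (by simpa using him 0 (by omega)) hEim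

theorem re_iterate_lower_bound_general (κ : ℂ) (n : ℕ) (h : ExpBounded κ n) :
    ∀ k : ℕ, k < n → |((E κ)^[k] κ).re| ≥ F^[k] (κ.re - 1) :=
  fun k hk => by linarith [F_iterate_add_one_le_abs_re h k hk]

/-- If κ is exponentially κ-bounded for n ≥ 1 steps, then
    |Re(E_κ^k(κ))| ≥ F^k(Re(κ) - 1) for all 0 ≤ k ≤ n - 1. -/
theorem re_iterate_lower_bound (κ : ℂ) (n : ℕ) (hn : 1 ≤ n) (h : ExpBounded κ n) :
    ∀ k : ℕ, k < n → |((E κ)^[k] κ).re| ≥ F^[k] (κ.re - 1) :=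
  re_iterate_lower_bound_general κ n h
end

section
/- Let κ ∈ ℂ with Re(κ) ≥ 2 and suppose κ is exponentially κ-bounded for n ≥ 2 steps. Let f_n(κ) = E_κ^{n-1}(κ) (as a holomorphic function of the parameter κ). Then |f_n'(κ)| ≥ F^{n-1}(Re(κ) - 1), where F(t) = e^t - 1. -/
/-- The map f_n(κ) = E_κ^{n-1}(κ) as a function of the parameter κ. -/
noncomputable def f (n : ℕ) (κ : ℂ) : ℂ := (E κ)^[n - 1] κ

open Real

lemma self_le_F (t : ℝ) : t ≤ F t := by
  linarith [add_one_le_exp t, show F t = exp t - 1 from rfl]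

lemma iterate_F_succ (k : ℕ) (t : ℝ) : F^[k + 1] t = exp (F^[k] t) - 1 :=
  Function.iterate_succ_apply' F k t

lemma self_le_iterate_F (k : ℕ) (t : ℝ) : t ≤ F^[k] t := by
  induction k with
  | zero => rfl
  | succ k ih => exact ih.trans (by rw [Function.iterate_succ_apply']; exact self_le_F _)

lemma iterate_F_add_one_le_iterate_F (k : ℕ) {s t : ℝ} (hs : 0 ≤ s) (hst : s + 1 ≤ t) :
    F^[k] s + 1 ≤ F^[k] t := by
  induction k generalizing s t with
  | zero => exact hst
  | succ k ih =>
    simp only [Function.iterate_succ_apply]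
    have hs1 : 1 ≤ exp s := one_le_exp hs
    have hexp : exp s * exp 1 ≤ exp t := by
      rw [← exp_add]; exact exp_le_exp.2 hst
    refine ih (by simp only [F]; linarith) ?_
    simp only [F]
    nlinarith [exp_one_gt_two]

lemma E_re (κ z : ℂ) : (E κ z).re = exp z.re * cos z.im + κ.re := by
  simp [E, Complex.exp_re]

lemma E_im (κ z : ℂ) : (E κ z).im = exp z.re * sin z.im + κ.im := by
  simp [E, Complex.exp_im]

lemma half_le_cos_of_abs_sin_le_half {y : ℝ} (hsin : |sin y| ≤ 1 / 2) (hcos : -(1 / 2) < cos y) :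
    1 / 2 ≤ cos y := by
  nlinarith [sin_sq_add_cos_sq y, sq_abs (sin y), abs_nonneg (sin y)]

lemma half_le_cos_im_of_re_E_pos {κ z : ℂ} (hre : 0 < (E κ z).re)
    (hκ : 2 * κ.re ≤ exp z.re) (him : 2 * (|(E κ z).im| + |κ.im|) ≤ exp z.re) :
    1 / 2 ≤ cos z.im := by
  have hx := exp_pos z.re
  apply half_le_cos_of_abs_sin_le_half
  · have hsin : exp z.re * |sin z.im| ≤ |(E κ z).im| + |κ.im| := by
      rw [← abs_of_pos hx, ← abs_mul, show exp z.re * sin z.im = (E κ z).im - κ.im by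
        rw [E_im]; ring]
      exact abs_sub _ _
    rw [le_div_iff₀ two_pos]
    nlinarith
  · rw [E_re] at hre
    nlinarith

lemma exp_re_div_two_add_re_le_re_E {κ z : ℂ} (hre : 0 < (E κ z).re)
    (hκ : 2 * κ.re ≤ exp z.re) (him : 2 * (|(E κ z).im| + |κ.im|) ≤ exp z.re) :
    exp z.re / 2 + κ.re ≤ (E κ z).re := by
  rw [E_re]
  nlinarith [half_le_cos_im_of_re_E_pos hre hκ him, exp_pos z.re]

lemma iterate_F_add_one_le_re_orbit {κ : ℂ} {n : ℕ} (h : ExpBounded κ n) :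
    ∀ k, k + 1 < n → F^[k] (κ.re - 1) + 1 ≤ ((E κ)^[k] κ).re := by
  obtain ⟨hκ4, him, hre⟩ := h
  intro k
  induction k with
  | zero => intro _; simp
  | succ k ih =>
    intro hk
    set z := (E κ)^[k] κ
    set C := F^[k] (κ.re - 2)
    have hz : F^[k] (κ.re - 1) + 1 ≤ z.re := ih (by omega)
    have hsucc : (E κ)^[k + 1] κ = E κ z := Function.iterate_succ_apply' _ _ _
    have hCz : C + 2 ≤ z.re := by
      linarith [iterate_F_add_one_le_iterate_F k (s := κ.re - 2) (t := κ.re - 1)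
        (by linarith) (by linarith)]
    have hzκ : κ.re ≤ z.re := by linarith [self_le_iterate_F k (κ.re - 1)]
    have hexp2 : exp C * 4 ≤ exp z.re := by
      refine le_trans ?_ (exp_le_exp.2 hCz)
      rw [exp_add]
      gcongr
      linarith [quadratic_le_exp_of_nonneg (x := 2) (by norm_num)]
    have himz : |(E κ z).im| < exp C - 1 := by
      simpa [hsucc, iterate_F_succ] using him (k + 1) (by omega)
    have himκ : |κ.im| < C := by
      linarith [show |κ.im| < κ.re - 2 by simpa using him 0 (by omega),
        self_le_iterate_F k (κ.re - 2)]
    have hCexp : C ≤ exp C - 1 := self_le_F C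
    have hκz : 2 * κ.re ≤ exp z.re := calc
      2 * κ.re ≤ exp 1 * κ.re := by gcongr; exact exp_one_gt_two.le
      _ ≤ exp κ.re := exp_one_mul_le_exp
      _ ≤ exp z.re := exp_le_exp.2 hzκ
    have hstep := exp_re_div_two_add_re_le_re_E (κ := κ) (z := z)
      (by simpa [hsucc] using hre (k + 1) hk) hκz (by linarith)
    have hexpz : exp (F^[k] (κ.re - 1)) * exp 1 ≤ exp z.re := by
      rw [← exp_add]; exact exp_le_exp.2 hz
    rw [hsucc, iterate_F_succ]
    nlinarith [exp_one_gt_two, exp_pos (F^[k] (κ.re - 1))]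

noncomputable def orbitDeriv (κ : ℂ) : ℕ → ℂ
  | 0 => 1
  | m + 1 => Complex.exp ((E κ)^[m] κ) * orbitDeriv κ m + 1

lemma hasDerivAt_iterate_E (κ : ℂ) (m : ℕ) :
    HasDerivAt (fun z : ℂ => (E z)^[m] z) (orbitDeriv κ m) κ := by
  induction m with
  | zero => exact hasDerivAt_id' κ
  | succ m ih =>
    have hiter : (fun z : ℂ => (E z)^[m + 1] z) = fun z => Complex.exp ((E z)^[m] z) + z := by
      funext z
      exact Function.iterate_succ_apply' _ _ _
    rw [hiter]
    exact ih.cexp.add (hasDerivAt_id' κ)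

lemma deriv_f (n : ℕ) (κ : ℂ) : deriv (f n) κ = orbitDeriv κ (n - 1) :=
  (hasDerivAt_iterate_E κ (n - 1)).deriv

lemma F_le_norm_orbitDeriv_succ {κ : ℂ} {m : ℕ} {t : ℝ} (hD : 1 ≤ ‖orbitDeriv κ m‖)
    (ht : t ≤ ((E κ)^[m] κ).re) : F t ≤ ‖orbitDeriv κ (m + 1)‖ := by
  set u := Complex.exp ((E κ)^[m] κ) * orbitDeriv κ m
  have hu : exp t ≤ ‖u‖ := by
    rw [norm_mul, Complex.norm_exp]
    nlinarith [exp_le_exp.2 ht, exp_pos t]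
  have htri : ‖u‖ ≤ ‖u + 1‖ + 1 := by
    simpa using norm_sub_le (u + 1) 1
  show exp t - 1 ≤ ‖u + 1‖
  linarith

lemma iterate_F_le_norm_orbitDeriv {κ : ℂ} {a : ℝ} (ha : 1 ≤ a) (N : ℕ)
    (hre : ∀ m ≤ N, F^[m] a ≤ ((E κ)^[m] κ).re) :
    F^[N + 1] a ≤ ‖orbitDeriv κ (N + 1)‖ := by
  induction N with
  | zero => exact F_le_norm_orbitDeriv_succ (by simp [orbitDeriv]) (by simpa using hre 0 le_rfl)
  | succ N ih =>
    have hD := ih fun m hm => hre m (by omega)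
    rw [Function.iterate_succ_apply']
    exact F_le_norm_orbitDeriv_succ (by linarith [self_le_iterate_F (N + 1) a]) (hre _ le_rfl)

theorem param_deriv_lower_bound_general (κ : ℂ) (n : ℕ) (hn : 2 ≤ n)
    (h : ExpBounded κ n) :
    ‖deriv (f n) κ‖ ≥ F^[n - 1] (κ.re - 1) := by
  obtain ⟨N, rfl⟩ : ∃ N, n = N + 2 := ⟨n - 2, by omega⟩
  rw [deriv_f]
  exact iterate_F_le_norm_orbitDeriv (by linarith [h.1]) N fun m hm =>
    by linarith [iterate_F_add_one_le_re_orbit h m (by omega)]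

/-- If Re(κ) ≥ 2 and κ is exponentially κ-bounded for n ≥ 2 steps, then
    |f_n'(κ)| ≥ F^{n-1}(Re(κ) - 1). -/
theorem param_deriv_lower_bound (κ : ℂ) (n : ℕ) (hn : 2 ≤ n) (hκ : 2 ≤ κ.re)
    (h : ExpBounded κ n) :
    ‖deriv (f n) κ‖ ≥ F^[n - 1] (κ.re - 1) :=
  param_deriv_lower_bound_general κ n hn h
end
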